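/- Fast convergence forces a large committal rate on the optimal action: let A be any policy optimization algorithm (for each t a deterministic map from histories (θ_1, a_1, r(a_1), …, θ_t, a_t, r(a_t)) to θ_{t+1} ∈ ℝ^K) that is optimality-smart, meaning that for every t ≥ 1 and every action sequence (a_1, …, a_{t−1}) with induced parameters θ_t, one has π_{θ̃_t}(a*) ≥ π_{θ_t}(a*), where (θ̃_t) is the sequence induced by sampling a* at every step from the same θ_1. If there exist α > 0, C > 0 and an action sequence whose induced parameter sequence (θ_t) satisfies (π* − π_{θ_t})ᵀ r ≤ C/t^α for all t ≥ 1 (as happens whenever A with on-policy sampling converges at rate O(1/t^α) with positive probability), then, since (π* − π_θ)ᵀ r ≥ (1 − π_θ(a*))·Δ for every θ, it follows that t^α·(1 − π_{θ̃_t}(a*)) ≤ C/Δ for all t ≥ 1; hence κ(A, a*) ≥ α. -/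

import Mathlib

/-!
Since `a*` is the unique optimum, every unit of probability that `π_θ` puts off `a*` costs at
least the gap `Δ` in expected reward, so `(1 - π_θ(a*)) Δ ≤ (π* - π_θ)ᵀ r`. Along the fast
action sequence the right side is at most `C / t^α`, and optimality-smartness says the
all-`a*` sequence puts at least as much mass on `a*`, so the same bound holds for it.
-/

open Finset Real Filter

/-- Softmax policy: `π_θ(a) = exp(θ(a)) / Σ_{a'} exp(θ(a'))`. -/
noncomputable def softmax {K : ℕ} (θ : Fin K → ℝ) (a : Fin K) : ℝ :=
  Real.exp (θ a) / ∑ a', Real.exp (θ a')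

/-- Expected reward `π_θᵀ r`. -/
noncomputable def expReward {K : ℕ} (r θ : Fin K → ℝ) : ℝ :=
  ∑ a, softmax θ a * r a

lemma softmax_nonneg {K : ℕ} (θ : Fin K → ℝ) (a : Fin K) : 0 ≤ softmax θ a := by
  unfold softmax
  positivity

lemma sum_softmax {K : ℕ} [Nonempty (Fin K)] (θ : Fin K → ℝ) : ∑ a, softmax θ a = 1 := by
  have hZ : (0 : ℝ) < ∑ a', Real.exp (θ a') :=
    Finset.sum_pos (fun _ _ => Real.exp_pos _) Finset.univ_nonempty
  unfold softmax
  rw [← Finset.sum_div, div_self hZ.ne']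

lemma sub_expReward_eq_sum_erase {K : ℕ} [Nonempty (Fin K)] (r θ : Fin K → ℝ) (astar : Fin K) :
    r astar - expReward r θ = ∑ a ∈ univ.erase astar, softmax θ a * (r astar - r a) := by
  rw [Finset.sum_erase _ (by simp), expReward]
  simp only [mul_sub, Finset.sum_sub_distrib, ← Finset.sum_mul, sum_softmax, one_mul]

lemma one_sub_softmax_mul_le_regret {K : ℕ} (r θ : Fin K → ℝ) (astar : Fin K) {Δ : ℝ}
    (hgap : ∀ a, a ≠ astar → Δ ≤ r astar - r a) :
    (1 - softmax θ astar) * Δ ≤ r astar - expReward r θ := by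
  have : Nonempty (Fin K) := ⟨astar⟩
  have hoff : 1 - softmax θ astar = ∑ a ∈ univ.erase astar, softmax θ a := by
    rw [Finset.sum_erase_eq_sub (mem_univ astar), sum_softmax]
  rw [sub_expReward_eq_sum_erase, hoff, Finset.sum_mul]
  exact Finset.sum_le_sum fun a ha =>
    mul_le_mul_of_nonneg_left (hgap a (Finset.ne_of_mem_erase ha)) (softmax_nonneg θ a)

lemma sub_sSup_image_ne_le {K : ℕ} (r : Fin K → ℝ) {astar a : Fin K} (ha : a ≠ astar) :
    r astar - sSup (r '' {a | a ≠ astar}) ≤ r astar - r a :=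
  sub_le_sub_left (le_csSup (Set.toFinite _).bddAbove (Set.mem_image_of_mem r ha)) _

lemma sub_sSup_image_ne_pos {K : ℕ} (hK : 2 ≤ K) (r : Fin K → ℝ) (astar : Fin K)
    (hstar : ∀ a, a ≠ astar → r a < r astar) :
    0 < r astar - sSup (r '' {a | a ≠ astar}) := by
  have : Nontrivial (Fin K) := Fin.nontrivial_iff_two_le.mpr hK
  obtain ⟨b, hb⟩ := exists_ne astar
  obtain ⟨c, hc, hcmax⟩ :=
    (Set.Nonempty.image r ⟨b, hb⟩).csSup_mem (Set.toFinite (r '' {a | a ≠ astar}))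
  rw [← hcmax]
  linarith [hstar c hc]

theorem fast_rate_forces_large_committal_rate_on_optimal_action_general
    {K : ℕ} (hK : 2 ≤ K) (r : Fin K → ℝ)
    (astar : Fin K) (hstar : ∀ a, a ≠ astar → r a < r astar)
    (Δ : ℝ) (hΔ : Δ = r astar - sSup (r '' {a | a ≠ astar}))
    (A : List (Fin K × ℝ) → (Fin K → ℝ))
    (hsmart : ∀ (acts : ℕ → Fin K) (t : ℕ),
      softmax (A ((List.range t).map fun k => (acts k, r (acts k)))) astar ≤
        softmax (A (List.replicate t (astar, r astar))) astar)
    (acts : ℕ → Fin K) (α C : ℝ)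
    (hconv : ∀ t : ℕ,
      r astar - expReward r (A ((List.range t).map fun k => (acts k, r (acts k)))) ≤
        C / ((t : ℝ) + 1) ^ α) :
    ∀ t : ℕ,
      ((t : ℝ) + 1) ^ α * (1 - softmax (A (List.replicate t (astar, r astar))) astar) ≤
        C / Δ := by
  intro t
  have hΔpos : 0 < Δ := hΔ ▸ sub_sSup_image_ne_pos hK r astar hstar
  have hgap : ∀ a, a ≠ astar → Δ ≤ r astar - r a := fun _ ha => hΔ ▸ sub_sSup_image_ne_le r ha
  have hT : (0 : ℝ) < ((t : ℝ) + 1) ^ α := Real.rpow_pos_of_pos (by positivity) α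
  have hbound : (1 - softmax (A (List.replicate t (astar, r astar))) astar) * Δ ≤
      C / ((t : ℝ) + 1) ^ α :=
    calc _ ≤ (1 - softmax (A ((List.range t).map fun k => (acts k, r (acts k)))) astar) * Δ :=
          mul_le_mul_of_nonneg_right (sub_le_sub_left (hsmart acts t) 1) hΔpos.le
      _ ≤ _ := one_sub_softmax_mul_le_regret r _ astar hgap
      _ ≤ _ := hconv t
  rw [le_div_iff₀ hΔpos]
  rw [le_div_iff₀ hT] at hbound
  linarith

/-- Fast convergence forces a large committal rate on the optimal action.
A policy optimization algorithm `A` maps a history of action–reward pairs to the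
next parameter vector (so `θ_1 = A []` and `θ_{t+1} = A [(a_1, r(a_1)), …, (a_t, r(a_t))]`).
`A` is optimality-smart: for every action sequence the induced parameters satisfy
`π_{θ̃_t}(a*) ≥ π_{θ_t}(a*)`, where `θ̃ t = A (replicate t (a*, r(a*)))` is the
sequence induced by sampling `a*` at every step.  If some action sequence achieves
`(π* − π_{θ_t})ᵀ r ≤ C/t^α` for all `t` (with `α, C > 0`), then
`t^α·(1 − π_{θ̃_t}(a*)) ≤ C/Δ` for all `t`; hence `κ(A, a*) ≥ α`.
(Here the Lean index `t` is the paper's `t + 1`, so the factor `t^α` becomes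
`(t+1)^α`.) -/
theorem fast_rate_forces_large_committal_rate_on_optimal_action
    {K : ℕ} (hK : 2 ≤ K) (r : Fin K → ℝ)
    (hr : ∀ a, 0 < r a ∧ r a ≤ 1)
    (astar : Fin K) (hstar : ∀ a, a ≠ astar → r a < r astar)
    (Δ : ℝ) (hΔ : Δ = r astar - sSup (r '' {a | a ≠ astar}))
    (A : List (Fin K × ℝ) → (Fin K → ℝ))
    (hsmart : ∀ (acts : ℕ → Fin K) (t : ℕ),
      softmax (A ((List.range t).map fun k => (acts k, r (acts k)))) astar ≤
        softmax (A (List.replicate t (astar, r astar))) astar)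
    (acts : ℕ → Fin K) (α C : ℝ) (hα : 0 < α) (hC : 0 < C)
    (hconv : ∀ t : ℕ,
      r astar - expReward r (A ((List.range t).map fun k => (acts k, r (acts k)))) ≤
        C / ((t : ℝ) + 1) ^ α) :
    ∀ t : ℕ,
      ((t : ℝ) + 1) ^ α * (1 - softmax (A (List.replicate t (astar, r astar))) astar) ≤
        C / Δ :=
  fast_rate_forces_large_committal_rate_on_optimal_action_general hK r astar hstar Δ hΔ A hsmart
    acts α C hconv
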